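/- Fix x ∈ ℝ. With c_n = 2 − 2b_n^{−2} and d_n = b_n² − 2b_n^{−2}, as n → ∞, n · (d/dx) Φ((c_n x + d_n)^{1/2}) = e^{−x} ( 1 + b_n^{−4} (1/2 + x + x²) − b_n^{−6} (1/3 + 2x + 2x² + (4/3) x³) + O(b_n^{−8}) ), where the derivative in x equals 2^{−1} n c_n (c_n x + d_n)^{−1/2} φ((c_n x + d_n)^{1/2}) and is defined for n large enough that c_n x + d_n > 0. -/

import Mathlib

open Real Filter Topology

/-- The standard normal distribution function. -/
noncomputable def stdNormalCDF (x : ℝ) : ℝ :=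
  ∫ u in Set.Iic x, Real.exp (-u ^ 2 / 2) / Real.sqrt (2 * Real.pi)

/-- The standard normal density. -/
noncomputable def stdNormalPDF (x : ℝ) : ℝ :=
  Real.exp (-x ^ 2 / 2) / Real.sqrt (2 * Real.pi)

open MeasureTheory Asymptotics

/-!
Put `u = b_n⁻²`. Then `c_n x + d_n = b_n² Q(u)` with `Q(u) = 1 + 2xu − (2x + 2)u²`, and the
equation defining `b_n` reads `n = √(2π) b_n e^{b_n²/2}`, so `n eˣ` times the derivative equals
`G(u) = (1 − u) e^{(x+1)u} / √Q(u)`. The claim is `G(u) = P(u) + O(u⁴)` as `u → 0`, with `P`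
the stated cubic. Instead of expanding `Q^{−1/2}` we compare squares:
`Q (G² − P²) = (1 − u)² e^{2(x+1)u} − P² Q`, and replacing the exponential by its cubic Taylor
polynomial leaves a polynomial divisible by `u⁴`.
Since `G + P → 2`, also `G − P = O(u⁴)`; and `b_n → ∞` forces `u → 0`.
-/

theorem hasDerivAt_integral_Iic {f : ℝ → ℝ} (hf : Integrable f) {t : ℝ}
    (hft : ContinuousAt f t) : HasDerivAt (fun s => ∫ u in Set.Iic s, f u) (f t) t := by
  have hsplit : ∀ s,
      ∫ u in Set.Iic s, f u = (∫ u in Set.Iic 0, f u) + ∫ u in (0 : ℝ)..s, f u := fun s => by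
    rw [← intervalIntegral.integral_Iic_sub_Iic hf.integrableOn hf.integrableOn]
    ring
  exact ((intervalIntegral.integral_hasDerivAt_right hf.intervalIntegrable
    hf.aestronglyMeasurable.stronglyMeasurableAtFilter hft).const_add _).congr_of_eventuallyEq
    (Eventually.of_forall hsplit)

theorem integrable_stdNormalPDF : Integrable stdNormalPDF := by
  convert (integrable_exp_neg_mul_sq (b := 1 / 2) (by norm_num)).div_const (√(2 * π)) using 2
  simp only [stdNormalPDF]; ring_nf

theorem hasDerivAt_stdNormalCDF (t : ℝ) : HasDerivAt stdNormalCDF (stdNormalPDF t) t :=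
  hasDerivAt_integral_Iic integrable_stdNormalPDF (by unfold stdNormalPDF; fun_prop)

theorem hasDerivAt_stdNormalCDF_sqrt_affine {c d x : ℝ} (hs : 0 < c * x + d) :
    HasDerivAt (fun y => stdNormalCDF ((c * y + d) ^ ((1 : ℝ) / 2)))
      ((2 : ℝ)⁻¹ * c * (c * x + d) ^ (-(1 : ℝ) / 2) *
        stdNormalPDF ((c * x + d) ^ ((1 : ℝ) / 2))) x := by
  have hlin : HasDerivAt (fun y => c * y + d) c x := by
    simpa using ((hasDerivAt_id x).const_mul c).add_const d
  refine ((hasDerivAt_stdNormalCDF _).comp x (hlin.rpow_const (Or.inl hs.ne'))).congr_deriv ?_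
  rw [show (1 : ℝ) / 2 - 1 = -(1 : ℝ) / 2 by norm_num]
  ring

theorem stdNormalPDF_rpow_half {s : ℝ} (hs : 0 ≤ s) :
    stdNormalPDF (s ^ ((1 : ℝ) / 2)) = exp (-s / 2) / √(2 * π) := by
  rw [stdNormalPDF, ← rpow_natCast, ← rpow_mul hs]
  norm_num

theorem Asymptotics.IsBigO.sub_of_sq_sub {α : Type*} {l : Filter α} {f g k : α → ℝ} {c : ℝ}
    (hc : 0 < c) (hf : ∀ᶠ a in l, 0 ≤ f a) (hg : Tendsto g l (𝓝 c))
    (h : (fun a => f a ^ 2 - g a ^ 2) =O[l] k) : (fun a => f a - g a) =O[l] k := by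
  have hg' : ∀ᶠ a in l, c / 2 < g a := hg.eventually (lt_mem_nhds (by linarith))
  have hinv : (fun a => (f a + g a)⁻¹) =O[l] (fun _ => (1 : ℝ)) := by
    refine IsBigO.of_bound (c / 2)⁻¹ ?_
    filter_upwards [hf, hg'] with a hfa hga
    rw [norm_inv, norm_one, mul_one, norm_of_nonneg (by linarith)]
    exact inv_anti₀ (by positivity) (by linarith)
  refine (h.mul hinv).congr' ?_ (Eventually.of_forall fun a => mul_one (k a))
  filter_upwards [hf, hg'] with a hfa hga
  field_simp [show f a + g a ≠ 0 by linarith]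
  ring

section Expansion

variable (x : ℝ)

/-- With `u = b_n⁻²`, the argument of `Φ` is `c_n x + d_n = b_n² · affineArgRatio x u`. -/
def affineArgRatio (u : ℝ) : ℝ := 1 + 2 * x * u - (2 * x + 2) * u ^ 2

/-- `n eˣ` times the derivative, written in the variable `u = b_n⁻²`. -/
noncomputable def rescaledDensity (u : ℝ) : ℝ :=
  (1 - u) * exp ((x + 1) * u) / √(affineArgRatio x u)

noncomputable def densityExpansion (u : ℝ) : ℝ :=
  1 + (1 / 2 + x + x ^ 2) * u ^ 2 - (1 / 3 + 2 * x + 2 * x ^ 2 + 4 / 3 * x ^ 3) * u ^ 3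

theorem tendsto_affineArgRatio : Tendsto (affineArgRatio x) (𝓝 0) (𝓝 1) := by
  simpa [affineArgRatio] using
    ((by unfold affineArgRatio; fun_prop) : Continuous (affineArgRatio x)).tendsto 0

theorem tendsto_densityExpansion : Tendsto (densityExpansion x) (𝓝 0) (𝓝 1) := by
  simpa [densityExpansion] using
    ((by unfold densityExpansion; fun_prop) : Continuous (densityExpansion x)).tendsto 0

/-- The coefficients of `u⁰, …, u³` cancel; this is what determines the coefficients of
`densityExpansion`. -/
theorem exists_taylor_sq_sub_densityExpansion_sq_eq_pow_four_mul :
    ∃ W : ℝ → ℝ, Continuous W ∧ ∀ u,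
      (1 - u) ^ 2 * ∑ i ∈ Finset.range 4, (2 * (x + 1) * u) ^ i / i.factorial -
        densityExpansion x u ^ 2 * affineArgRatio x u = u ^ 4 * W u := by
  refine ⟨fun u => (13/12 + 7/3*x + 8*x^2 + 22/3*x^3 + 13/3*x^4)
      + u * ((1/3 - 19/6*x - 22/3*x^2 - 20/3*x^3 - 8/3*x^4 + 2/3*x^5)
      + u * ((7/18 + 11/6*x + 6*x^2 + 112/9*x^3 + 46/3*x^4 + 10*x^5 + 32/9*x^6)
      + u * ((-2/3 - 56/9*x - 64/3*x^2 - 128/3*x^3 - 448/9*x^4 - 112/3*x^5 - 16*x^6 - 32/9*x^7)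
      + u * (2/9 + 26/9*x + 40/3*x^2 + 256/9*x^3 + 328/9*x^4 + 88/3*x^5 + 128/9*x^6
        + 32/9*x^7)))), by fun_prop, fun u => ?_⟩
  simp only [Finset.sum_range_succ, Finset.sum_range_zero, Nat.factorial, densityExpansion,
    affineArgRatio]
  push_cast
  ring

theorem rescaledDensity_sq_sub_densityExpansion_sq_isBigO :
    (fun u => rescaledDensity x u ^ 2 - densityExpansion x u ^ 2) =O[𝓝 0] (· ^ 4) := by
  obtain ⟨W, hW, hWeq⟩ := exists_taylor_sq_sub_densityExpansion_sq_eq_pow_four_mul x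
  have hexp : (fun u => exp (2 * (x + 1) * u) -
      ∑ i ∈ Finset.range 4, (2 * (x + 1) * u) ^ i / i.factorial) =O[𝓝 0] (· ^ 4) := by
    refine ((exp_sub_sum_range_isBigO_pow 4).comp_tendsto ?_).trans ?_
    · exact (continuous_const_mul _).tendsto' 0 0 (mul_zero _)
    · simp_rw [Function.comp_def, mul_pow (2 * (x + 1))]
      exact isBigO_const_mul_self _ _ _
  have hnum : (fun u => (1 - u) ^ 2 * exp (2 * (x + 1) * u) -
      densityExpansion x u ^ 2 * affineArgRatio x u) =O[𝓝 0] (· ^ 4) := by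
    have h1 : (fun u : ℝ => (1 - u) ^ 2) =O[𝓝 0] (fun _ => (1 : ℝ)) :=
      ((by fun_prop : Continuous fun u : ℝ => (1 - u) ^ 2).tendsto 0).isBigO_one ℝ
    have hW4 : (fun u => u ^ 4 * W u) =O[𝓝 0] (· ^ 4) :=
      ((isBigO_refl (fun u : ℝ => u ^ 4) _).mul ((hW.tendsto 0).isBigO_one ℝ)).congr_right
        fun u => mul_one _
    refine (((h1.mul hexp).congr_right fun u => one_mul _).add hW4).congr_left fun u => ?_
    rw [← hWeq]
    ring
  have hQ := tendsto_affineArgRatio x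
  refine (hnum.mul ((hQ.inv₀ one_ne_zero).isBigO_one ℝ)).congr' ?_ (by simp)
  filter_upwards [hQ.eventually (lt_mem_nhds one_pos)] with u hu
  rw [rescaledDensity, div_pow, mul_pow, sq_sqrt hu.le, ← exp_nat_mul]
  field_simp
  ring_nf

theorem rescaledDensity_sub_densityExpansion_isBigO :
    (fun u => rescaledDensity x u - densityExpansion x u) =O[𝓝 0] (· ^ 4) := by
  refine IsBigO.sub_of_sq_sub one_pos ?_ (tendsto_densityExpansion x)
    (rescaledDensity_sq_sub_densityExpansion_sq_isBigO x)
  filter_upwards [Iic_mem_nhds one_pos] with u hu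
  have : 0 ≤ 1 - u := by simp only [Set.mem_Iic] at hu; linarith
  unfold rescaledDensity
  positivity

end Expansion

theorem tendsto_sq_atTop_of_two_pi_mul_sq_mul_exp_eq {b : ℕ → ℝ}
    (hb : ∀ᶠ n in atTop, 2 * π * b n ^ 2 * exp (b n ^ 2) = (n : ℝ) ^ 2) :
    Tendsto (fun n => b n ^ 2) atTop atTop := by
  refine tendsto_atTop.2 fun B => ?_
  have hn : ∀ᶠ n : ℕ in atTop, 2 * π * |B| * exp B < (n : ℝ) ^ 2 :=
    ((tendsto_pow_atTop two_ne_zero).comp tendsto_natCast_atTop_atTop).eventually_gt_atTop _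
  filter_upwards [hb, hn] with n hbn hn
  by_contra! hlt
  have : b n ^ 2 * exp (b n ^ 2) ≤ |B| * exp B :=
    mul_le_mul (hlt.le.trans (le_abs_self B)) (exp_le_exp.2 hlt.le) (exp_pos _).le (abs_nonneg _)
  nlinarith [pi_pos]

theorem eq_sqrt_two_pi_mul_mul_exp {b m : ℝ} (hb : 0 ≤ b) (hm : 0 ≤ m)
    (h : 2 * π * b ^ 2 * exp (b ^ 2) = m ^ 2) : m = √(2 * π) * b * exp (b ^ 2 / 2) := by
  refine (sq_eq_sq₀ hm (by positivity)).1 ?_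
  rw [← h, mul_pow, mul_pow, sq_sqrt (by positivity), ← exp_nat_mul]
  ring_nf

theorem affine_eq_sq_mul_affineArgRatio {b : ℝ} (hb : b ≠ 0) (x : ℝ) :
    (2 - 2 / b ^ 2) * x + (b ^ 2 - 2 / b ^ 2) = b ^ 2 * affineArgRatio x (b ^ 2)⁻¹ := by
  unfold affineArgRatio
  field_simp
  ring

theorem sqrt_two_pi_mul_mul_exp_mul_deriv_eq_rescaledDensity {b c d x : ℝ} (hb : 0 < b)
    (hc : c = 2 - 2 / b ^ 2) (hd : d = b ^ 2 - 2 / b ^ 2) (hQ : 0 < affineArgRatio x (b ^ 2)⁻¹) :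
    √(2 * π) * b * exp (b ^ 2 / 2) * exp x *
        ((2 : ℝ)⁻¹ * c * (c * x + d) ^ (-(1 : ℝ) / 2) *
          stdNormalPDF ((c * x + d) ^ ((1 : ℝ) / 2))) =
      rescaledDensity x (b ^ 2)⁻¹ := by
  have hs : c * x + d = b ^ 2 * affineArgRatio x (b ^ 2)⁻¹ := by
    rw [hc, hd, affine_eq_sq_mul_affineArgRatio hb.ne' x]
  have hsqrt : √(c * x + d) = b * √(affineArgRatio x (b ^ 2)⁻¹) := by
    rw [hs, sqrt_mul (sq_nonneg b), sqrt_sq hb.le]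
  have hexp : exp (b ^ 2 / 2) * exp x * exp (-(c * x + d) / 2) = exp ((x + 1) * (b ^ 2)⁻¹) := by
    rw [← exp_add, ← exp_add, hc, hd]
    congr 1
    field_simp
    ring
  rw [stdNormalPDF_rpow_half (by rw [hs]; positivity), neg_div, rpow_neg (by rw [hs]; positivity),
    ← sqrt_eq_rpow, hsqrt, rescaledDensity, ← hexp, hc]
  field_simp

/-- Lemma 3.3, `t = 2`: With `b_n` the unique positive solution of
`2π b_n² exp(b_n²) = n²`, `c_n = 2 − 2b_n^{−2}` and `d_n = b_n² − 2b_n^{−2}`: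
`n (d/dx) Φ((c_n x + d_n)^{1/2}) = e^{−x}(1 + b_n^{−4}(1/2 + x + x²)
  − b_n^{−6}(1/3 + 2x + 2x² + (4/3)x³) + O(b_n^{−8}))`,
the derivative being `2⁻¹ n c_n (c_n x + d_n)^{−1/2} φ((c_n x + d_n)^{1/2})`. -/
theorem powered_extremes_cdf_deriv_expansion_t_eq_two
    (b : ℕ → ℝ)
    (hb : ∀ n : ℕ, 1 ≤ n → 0 < b n ∧
      2 * Real.pi * (b n) ^ 2 * Real.exp ((b n) ^ 2) = (n : ℝ) ^ 2)
    (x : ℝ)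
    (c d : ℕ → ℝ)
    (hc : ∀ n : ℕ, c n = 2 - 2 / (b n) ^ 2)
    (hd : ∀ n : ℕ, d n = (b n) ^ 2 - 2 / (b n) ^ 2) :
    ∃ C > (0 : ℝ), ∃ N : ℕ, ∀ n : ℕ, N ≤ n →
      0 < c n * x + d n ∧
      deriv (fun y : ℝ => stdNormalCDF ((c n * y + d n) ^ ((1 : ℝ) / 2))) x =
        (2 : ℝ)⁻¹ * c n * (c n * x + d n) ^ (-(1 : ℝ) / 2) *
          stdNormalPDF ((c n * x + d n) ^ ((1 : ℝ) / 2)) ∧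
      |(n : ℝ) * Real.exp x *
          deriv (fun y : ℝ => stdNormalCDF ((c n * y + d n) ^ ((1 : ℝ) / 2))) x -
        (1 + (1 / 2 + x + x ^ 2) / (b n) ^ 4 -
          (1 / 3 + 2 * x + 2 * x ^ 2 + 4 / 3 * x ^ 3) / (b n) ^ 6)|
      ≤ C / (b n) ^ 8 := by
  have hu : Tendsto (fun n => (b n ^ 2)⁻¹) atTop (𝓝 0) :=
    (tendsto_sq_atTop_of_two_pi_mul_sq_mul_exp_eq
      ((eventually_ge_atTop 1).mono fun n hn => (hb n hn).2)).inv_tendsto_atTop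
  obtain ⟨C, hC, hO⟩ :=
    ((rescaledDensity_sub_densityExpansion_isBigO x).comp_tendsto hu).exists_pos
  have hQ := ((tendsto_affineArgRatio x).comp hu).eventually (lt_mem_nhds one_pos)
  obtain ⟨N, hN⟩ := eventually_atTop.1 (hO.bound.and (hQ.and (eventually_ge_atTop 1)))
  refine ⟨C, hC, N, fun n hn => ?_⟩
  obtain ⟨hbound, hQn, hn1⟩ := hN n hn
  obtain ⟨hbn, hbeq⟩ := hb n hn1
  have hs : 0 < c n * x + d n := by
    rw [hc, hd, affine_eq_sq_mul_affineArgRatio hbn.ne' x]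
    exact mul_pos (by positivity) hQn
  have hderiv := (hasDerivAt_stdNormalCDF_sqrt_affine hs).deriv
  refine ⟨hs, hderiv, ?_⟩
  rw [hderiv, eq_sqrt_two_pi_mul_mul_exp hbn.le n.cast_nonneg hbeq,
    sqrt_two_pi_mul_mul_exp_mul_deriv_eq_rescaledDensity hbn (hc n) (hd n) hQn]
  convert hbound using 2
  · simp only [Function.comp_apply, norm_eq_abs, densityExpansion]
    ring_nf
  · rw [Function.comp_apply, norm_eq_abs, abs_of_nonneg (by positivity)]
    ring
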